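/- arXiv:1510.02010 — 2 statements merged into one kernel-verified Lean document; each statement's English description precedes it below -/
import Mathlib

section
/- Define $\Xi(x)=\inf_{0<\beta<1}\frac{\beta e^{-\beta x}}{(1-\beta)(1-e^{-\beta x})}$ for $x>0$. Then $\Xi(x)=1/x$ for all $0<x\le 2$. -/
/-!
Write the integrand as `β / ((1 - β) (e^{βx} - 1))` and put `t = βx`. The bound `e^t - 1 ≥ t`
gives the integrand at most `1 / ((1 - β) x)`, which tends to `1 / x` as `β → 0⁺`. Conversely,
for `x ≤ 2` we have `1 - β ≤ 1 - t/2`, and the Padé-type bound `(2 - t) e^t ≤ 2 + t` turns this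
into `(1 - β)(e^t - 1) ≤ t`, i.e. the integrand is at least `1 / x`.
-/

noncomputable def Xi (x : ℝ) : ℝ :=
  sInf ((fun β : ℝ => β * Real.exp (-β * x) /
    ((1 - β) * (1 - Real.exp (-β * x)))) '' Set.Ioo 0 1)

open Real Set Filter Topology

theorem Real.two_sub_mul_exp_le_two_add {t : ℝ} (ht : 0 ≤ t) : (2 - t) * exp t ≤ 2 + t := by
  let g : ℝ → ℝ := fun s => 2 + s - (2 - s) * exp s
  have hg_deriv (s : ℝ) : HasDerivAt g (1 - (1 - s) * exp s) s :=
    (((hasDerivAt_id' s).const_add 2).sub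
      (((hasDerivAt_id' s).const_sub 2).mul (hasDerivAt_exp s))).congr_deriv (by ring)
  have hg_mono : Monotone g := by
    refine monotone_of_deriv_nonneg (fun s => (hg_deriv s).differentiableAt) fun s => ?_
    rw [(hg_deriv s).deriv, sub_nonneg]
    calc (1 - s) * exp s ≤ exp (-s) * exp s := by
          gcongr
          linarith [add_one_le_exp (-s)]
      _ = 1 := by rw [← exp_add, neg_add_cancel, exp_zero]
  have := hg_mono ht
  simp only [g, exp_zero] at this
  linarith

theorem csInf_image_Ioo_eq_of_tendsto {f h : ℝ → ℝ} {a b c : ℝ} (hab : a < b)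
    (hc_le : ∀ β ∈ Ioo a b, c ≤ f β) (hle : ∀ β ∈ Ioo a b, f β ≤ h β)
    (hh : Tendsto h (𝓝[>] a) (𝓝 c)) : sInf (f '' Ioo a b) = c := by
  have hbdd : BddBelow (f '' Ioo a b) := ⟨c, forall_mem_image.2 hc_le⟩
  refine le_antisymm (ge_of_tendsto hh ?_) (le_csInf ((nonempty_Ioo.2 hab).image f)
    (forall_mem_image.2 hc_le))
  filter_upwards [Ioo_mem_nhdsGT hab] with β hβ
  exact (csInf_le hbdd (mem_image_of_mem f hβ)).trans (hle β hβ)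

theorem Xi_eq_sInf (x : ℝ) :
    Xi x = sInf ((fun β : ℝ => β / ((1 - β) * (exp (β * x) - 1))) '' Ioo 0 1) := by
  refine congrArg sInf (image_congr fun β _ => ?_)
  have hexp : exp (-β * x) * exp (β * x) = 1 := by rw [← exp_add]; simp
  have hden : (1 - exp (-β * x)) * exp (β * x) = exp (β * x) - 1 := by
    rw [sub_mul, hexp, one_mul]
  rw [← mul_div_mul_right _ _ (exp_pos (β * x)).ne', mul_assoc β, hexp, mul_one,
    mul_assoc (1 - β), hden]

section

variable {x β : ℝ}

theorem one_div_le_div_mul_exp_sub_one (hx0 : 0 < x) (hx2 : x ≤ 2) (hβ : β ∈ Ioo 0 1) :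
    1 / x ≤ β / ((1 - β) * (exp (β * x) - 1)) := by
  obtain ⟨hβ0, hβ1⟩ := hβ
  have ht : 0 < β * x := mul_pos hβ0 hx0
  have hexp : 0 < exp (β * x) - 1 := by linarith [add_one_le_exp (β * x)]
  rw [div_le_div_iff₀ hx0 (by positivity), one_mul]
  have hβ_le : 2 * (1 - β) ≤ 2 - β * x := by nlinarith
  have := calc 2 * ((1 - β) * (exp (β * x) - 1))
      _ ≤ (2 - β * x) * (exp (β * x) - 1) := by
        rw [← mul_assoc]; exact mul_le_mul_of_nonneg_right hβ_le hexp.le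
      _ ≤ 2 * (β * x) := by linarith [two_sub_mul_exp_le_two_add ht.le]
  linarith

theorem div_mul_exp_sub_one_le (hx0 : 0 < x) (hβ : β ∈ Ioo 0 1) :
    β / ((1 - β) * (exp (β * x) - 1)) ≤ 1 / ((1 - β) * x) := by
  obtain ⟨hβ0, hβ1⟩ := hβ
  have h1β : 0 < 1 - β := by linarith
  calc β / ((1 - β) * (exp (β * x) - 1)) ≤ β / ((1 - β) * (β * x)) := by
        gcongr
        linarith [add_one_le_exp (β * x)]
    _ = 1 / ((1 - β) * x) := by field_simp

end

theorem stmt2 (x : ℝ) (hx0 : 0 < x) (hx2 : x ≤ 2) : Xi x = 1 / x := by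
  rw [Xi_eq_sInf]
  refine csInf_image_Ioo_eq_of_tendsto zero_lt_one
    (fun β hβ => one_div_le_div_mul_exp_sub_one hx0 hx2 hβ)
    (fun β hβ => div_mul_exp_sub_one_le hx0 hβ) ?_
  have hcont : ContinuousAt (fun β : ℝ => 1 / ((1 - β) * x)) 0 := by
    fun_prop (disch := simp [hx0.ne'])
  simpa using hcont.tendsto.mono_left nhdsWithin_le_nhds
end

section
/- With $\Xi(x)=\inf_{0<\beta<1}\frac{\beta e^{-\beta x}}{(1-\beta)(1-e^{-\beta x})}$, one has $\lim_{x\to\infty}\frac{\Xi(x)}{x e^{-(x-1)}}=1$. -/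
open Real Filter Set Topology

lemma mul_exp_one_sub_le_one (s : ℝ) : s * exp (1 - s) ≤ 1 := by
  have h : s ≤ exp (s - 1) := by linarith [add_one_le_exp (s - 1)]
  calc s * exp (1 - s) ≤ exp (s - 1) * exp (1 - s) := by gcongr
    _ = 1 := by rw [← exp_add]; simp

lemma mul_exp_one_sub_le_of_one_le_of_le {a s : ℝ} (ha : 1 ≤ a) (has : a ≤ s) :
    s * exp (1 - s) ≤ a * exp (1 - a) := by
  have h : s ≤ a * exp (s - a) := by
    nlinarith [add_one_le_exp (s - a), mul_nonneg (sub_nonneg.2 ha) (sub_nonneg.2 has)]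
  calc s * exp (1 - s) ≤ a * exp (s - a) * exp (1 - s) := by gcongr
    _ = a * exp (1 - a) := by rw [mul_assoc, ← exp_add]; ring_nf

lemma exp_sub_one_le_mul_exp (u : ℝ) : exp u - 1 ≤ u * exp u := by
  have h := mul_le_mul_of_nonneg_left (by linarith [add_one_le_exp (-u)] : 1 - u ≤ exp (-u))
    (exp_pos u).le
  rw [← exp_add, add_neg_cancel, exp_zero] at h
  linarith

lemma sub_mul_exp_sub_one_div_le {x a t : ℝ} (ha : 1 ≤ a) (hax : a < x) (ht : 0 < t)
    (htx : t < x) :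
    (x - t) * (exp t - 1) / t ≤ exp (x - 1) * (1 / (x - a) + a * exp (1 - a)) := by
  have hexp : (x - t) * exp t = exp (x - 1) * ((x - t) * exp (1 - (x - t))) := by
    rw [mul_left_comm, ← exp_add]; ring_nf
  rcases le_total (x - t) a with hs | hs
  · calc (x - t) * (exp t - 1) / t ≤ (x - t) * exp t / (x - a) := by gcongr <;> linarith
      _ ≤ exp (x - 1) / (x - a) := by
          rw [hexp]
          gcongr
          exact (mul_le_mul_of_nonneg_left (mul_exp_one_sub_le_one _) (exp_pos _).le).trans_eq
            (mul_one _)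
      _ ≤ exp (x - 1) * (1 / (x - a) + a * exp (1 - a)) := by
          rw [div_eq_mul_one_div]
          gcongr
          exact le_add_of_nonneg_right (by positivity)
  · calc (x - t) * (exp t - 1) / t ≤ (x - t) * exp t := by
          rw [mul_div_assoc]
          gcongr
          rw [div_le_iff₀ ht, mul_comm]
          exact exp_sub_one_le_mul_exp t
      _ ≤ exp (x - 1) * (a * exp (1 - a)) := by
          rw [hexp]
          exact mul_le_mul_of_nonneg_left (mul_exp_one_sub_le_of_one_le_of_le ha hs)
            (exp_pos _).le
      _ ≤ exp (x - 1) * (1 / (x - a) + a * exp (1 - a)) := by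
          gcongr
          exact le_add_of_nonneg_left (one_div_nonneg.2 (by linarith))

lemma Xi_eq_sInf_image {x : ℝ} (hx : 0 < x) :
    Xi x = sInf ((fun t => t / ((x - t) * (exp t - 1))) '' Ioo 0 x) := by
  have hfun : (fun β : ℝ => β * exp (-β * x) / ((1 - β) * (1 - exp (-β * x)))) =
      (fun t => t / ((x - t) * (exp t - 1))) ∘ (· * x) := by
    funext β
    rw [Function.comp_apply, ← mul_div_mul_left _ _ (mul_ne_zero hx.ne' (exp_pos (β * x)).ne'),
      neg_mul, exp_neg]
    congr 1 <;> field_simp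
  rw [Xi, hfun, image_comp, image_mul_right_Ioo _ _ hx, zero_mul, one_mul]

lemma exp_neg_div_le_Xi {x a : ℝ} (ha : 1 ≤ a) (hax : a < x) :
    exp (-(x - 1)) / (1 / (x - a) + a * exp (1 - a)) ≤ Xi x := by
  have hx : 0 < x := by linarith
  rw [Xi_eq_sInf_image hx]
  refine le_csInf ((nonempty_Ioo.2 hx).image _) ?_
  rintro _ ⟨t, ⟨ht, htx⟩, rfl⟩
  have key := sub_mul_exp_sub_one_div_le ha hax ht htx
  have hxt : 0 < x - t := by linarith
  have he : 0 < exp t - 1 := by linarith [add_one_le_exp t]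
  have hM : 0 < 1 / (x - a) + a * exp (1 - a) := by
    have : 0 < x - a := by linarith
    positivity
  rw [div_le_div_iff₀ hM (by positivity), exp_neg, ← div_eq_inv_mul, div_le_iff₀ (exp_pos _)]
  rw [div_le_iff₀ ht] at key
  linarith

lemma Xi_le_div_exp_sub_one {x : ℝ} (hx : 1 < x) : Xi x ≤ (x - 1) / (exp (x - 1) - 1) := by
  rw [Xi_eq_sInf_image (by linarith)]
  refine csInf_le ⟨0, ?_⟩ ⟨x - 1, ⟨by linarith, by linarith⟩, by simp⟩
  rintro _ ⟨t, ⟨ht, htx⟩, rfl⟩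
  have hxt : 0 < x - t := by linarith
  have he : 0 < exp t - 1 := by linarith [add_one_le_exp t]
  positivity

lemma inv_le_Xi_div {x a : ℝ} (ha : 1 ≤ a) (hax : a < x) :
    (x * (1 / (x - a) + a * exp (1 - a)))⁻¹ ≤ Xi x / (x * exp (-(x - 1))) := by
  have hx : 0 < x := by linarith
  rw [le_div_iff₀ (by positivity)]
  calc (x * (1 / (x - a) + a * exp (1 - a)))⁻¹ * (x * exp (-(x - 1)))
      = exp (-(x - 1)) / (1 / (x - a) + a * exp (1 - a)) := by field_simp
    _ ≤ Xi x := exp_neg_div_le_Xi ha hax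

lemma Xi_div_le {x : ℝ} (hx : 1 < x) :
    Xi x / (x * exp (-(x - 1))) ≤ (1 - x⁻¹) * (1 - exp (-(x - 1)))⁻¹ := by
  have he : 1 < exp (x - 1) := one_lt_exp_iff.2 (by linarith)
  rw [div_le_iff₀ (by positivity)]
  calc Xi x ≤ (x - 1) / (exp (x - 1) - 1) := Xi_le_div_exp_sub_one hx
    _ = (1 - x⁻¹) * (1 - exp (-(x - 1)))⁻¹ * (x * exp (-(x - 1))) := by
      have : exp (x - 1) - 1 ≠ 0 := by linarith
      rw [exp_neg]
      field_simp

lemma tendsto_mul_inv_sub_sqrt_add :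
    Tendsto (fun x => x * (1 / (x - √x) + √x * exp (1 - √x))) atTop (𝓝 1) := by
  have h : Tendsto (fun y : ℝ => (1 - y⁻¹)⁻¹ + exp 1 * (y ^ 3 * exp (-y))) atTop (𝓝 1) := by
    simpa using ((tendsto_const_nhds.sub tendsto_inv_atTop_zero).inv₀
      (by norm_num : (1 : ℝ) - 0 ≠ 0)).add
      ((tendsto_pow_mul_exp_neg_atTop_nhds_zero 3).const_mul (exp 1))
  refine (h.comp tendsto_sqrt_atTop).congr' ?_
  filter_upwards [eventually_gt_atTop 1] with x hx
  obtain ⟨y, hy, rfl⟩ : ∃ y, 1 < y ∧ y ^ 2 = x :=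
    ⟨√x, by rw [← sqrt_one]; exact sqrt_lt_sqrt zero_le_one hx, sq_sqrt (by linarith)⟩
  have hy2 : y ^ 2 - y ≠ 0 := by nlinarith
  rw [Function.comp_apply, sqrt_sq (by linarith), sub_eq_add_neg 1 y, exp_add]
  field_simp

lemma tendsto_one_sub_inv_mul_inv_one_sub_exp :
    Tendsto (fun x => (1 - x⁻¹) * (1 - exp (-(x - 1)))⁻¹) atTop (𝓝 1) := by
  have he : Tendsto (fun x => exp (-(x - 1))) atTop (𝓝 0) :=
    tendsto_exp_neg_atTop_nhds_zero.comp (tendsto_atTop_add_const_right _ (-1) tendsto_id)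
  simpa using (tendsto_const_nhds.sub tendsto_inv_atTop_zero).mul
    ((tendsto_const_nhds.sub he).inv₀ (by norm_num : (1 : ℝ) - 0 ≠ 0))

theorem stmt4 :
    Filter.Tendsto (fun x : ℝ => Xi x / (x * Real.exp (-(x - 1)))) Filter.atTop
      (nhds 1) := by
  refine tendsto_of_tendsto_of_tendsto_of_le_of_le'
    (inv_one (G := ℝ) ▸ tendsto_mul_inv_sub_sqrt_add.inv₀ one_ne_zero)
    tendsto_one_sub_inv_mul_inv_one_sub_exp ?_ ?_
  · filter_upwards [eventually_gt_atTop 1] with x hx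
    exact inv_le_Xi_div (one_le_sqrt.2 hx.le) (sqrt_lt_self_iff.2 hx)
  · filter_upwards [eventually_gt_atTop 1] with x hx
    exact Xi_div_le hx
end
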